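/- Every veto interval graph is triangle-free. -/
import Mathlib


/-- A veto interval: a closed interval `[l, r]` with a veto mark `v`, `l < v < r`. -/
structure VetoInterval where
  l : ℝ
  v : ℝ
  r : ℝ
  hlv : l < v
  hvr : v < r

/-- Two veto intervals are adjacent iff they intersect and neither contains
the veto mark of the other. -/
def VIAdj (a b : VetoInterval) : Prop :=
  (a.v < b.l ∧ b.l < a.r ∧ a.r < b.v) ∨ (b.v < a.l ∧ a.l < b.r ∧ b.r < a.v)

/-- `G` is a veto interval graph. -/
def IsVIGraph {V : Type*} (G : SimpleGraph V) : Prop :=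
  ∃ f : V → VetoInterval, ∀ a b : V, G.Adj a b ↔ VIAdj (f a) (f b)

/-- Every veto interval graph is triangle-free. -/
theorem stmt_1 {V : Type*} (G : SimpleGraph V) (h : IsVIGraph G) :
    G.CliqueFree 3 := by
  obtain ⟨f, hf⟩ := h
  classical
  intro s hs
  obtain ⟨a, b, c, hab', hac', hbc', hseq⟩ := Finset.card_eq_three.mp hs.card_eq
  subst hseq
  have hab : G.Adj a b := hs.1 (by simp) (by simp) hab'
  have hac : G.Adj a c := hs.1 (by simp) (by simp) hac'
  have hbc : G.Adj b c := hs.1 (by simp) (by simp) hbc'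
  rw [hf] at hab hac hbc
  rcases hab with ⟨h1, h2, h3⟩ | ⟨h1, h2, h3⟩ <;>
    rcases hac with ⟨h4, h5, h6⟩ | ⟨h4, h5, h6⟩ <;>
      rcases hbc with ⟨h7, h8, h9⟩ | ⟨h7, h8, h9⟩ <;>
        linarith
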